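/- For every right-infinite binary word x, the word 001001·μ⁴(x) is 7/3-power-free if and only if 101·μ³(x) is 7/3-power-free. -/
import Mathlib


/-- Thue–Morse morphism on finite binary words: 0 ↦ 01, 1 ↦ 10 (0 = false, 1 = true). -/
def mu (w : List Bool) : List Bool := w.flatMap (fun b => [b, !b])

/-- Thue–Morse morphism on right-infinite binary words. -/
def muI (x : ℕ → Bool) : ℕ → Bool := fun n => if n % 2 = 0 then x (n / 2) else !(x (n / 2))

/-- Prepend a finite word to an infinite word. -/
def appendInf (u : List Bool) (x : ℕ → Bool) : ℕ → Bool :=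
  fun n => if h : n < u.length then u.get ⟨n, h⟩ else x (n - u.length)

/-- `w` is a prefix of the infinite word `x`. -/
def InfPrefix (w : List Bool) (x : ℕ → Bool) : Prop :=
  ∀ i (h : i < w.length), w.get ⟨i, h⟩ = x i

/-- The finite word `w` is `p`-periodic. -/
def ListPeriodic (w : List Bool) (p : ℕ) : Prop :=
  ∀ i, i + p < w.length → w.getD i false = w.getD (i + p) false

/-- `w` occurs as a factor of the infinite word `x`. -/
def IsFactor (x : ℕ → Bool) (w : List Bool) : Prop :=
  ∃ i, ∀ k (h : k < w.length), w.get ⟨k, h⟩ = x (i + k)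

/-- `w` has exponent ≥ β : it has a period `p ≥ 1` with `|w| ≥ β·p`. -/
def HasExpGE (w : List Bool) (β : ℚ) : Prop :=
  ∃ p, 1 ≤ p ∧ ListPeriodic w p ∧ β * p ≤ (w.length : ℚ)

/-- `w` has exponent > β. -/
def HasExpGT (w : List Bool) (β : ℚ) : Prop :=
  ∃ p, 1 ≤ p ∧ ListPeriodic w p ∧ β * p < (w.length : ℚ)

/-- The infinite word `x` is β-power-free: no factor has exponent ≥ β. -/
def FreeI (x : ℕ → Bool) (β : ℚ) : Prop := ∀ w, IsFactor x w → ¬ HasExpGE w β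

/-- The infinite word `x` is β⁺-power-free: no factor has exponent > β. -/
def FreePlusI (x : ℕ → Bool) (β : ℚ) : Prop := ∀ w, IsFactor x w → ¬ HasExpGT w β

/-- The finite word `x` is β-power-free. -/
def FreeL (x : List Bool) (β : ℚ) : Prop := ∀ w, w <:+: x → ¬ HasExpGE w β

/-- The finite word `x` is β⁺-power-free. -/
def FreeLPlus (x : List Bool) (β : ℚ) : Prop := ∀ w, w <:+: x → ¬ HasExpGT w β

/-- The infinite word `x` is 7/3-power-free. -/
def Free73 (x : ℕ → Bool) : Prop := FreeI x (7/3)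

/-- The prefix of length `n` of the infinite word `x` is `p`-periodic. -/
def PrefPeriodic (x : ℕ → Bool) (p n : ℕ) : Prop := ∀ i, i + p < n → x i = x (i + p)

/-- The set {ε, 0, 00, 1, 11}. -/
def P5 : Set (List Bool) :=
  {[], [false], [false, false], [true], [true, true]}

/-- Thue–Morse word: parity of the number of ones in base 2. -/
def tmWord (n : ℕ) : Bool := (Nat.digits 2 n).sum % 2 == 1

/-- Lexicographic order (0 < 1) on infinite binary words. -/
def LexLE (u v : ℕ → Bool) : Prop :=
  u = v ∨ ∃ n, (∀ k < n, u k = v k) ∧ u n = false ∧ v n = true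

/-- The 2-kernel of an infinite word. -/
def Kernel2 (x : ℕ → Bool) : Set (ℕ → Bool) :=
  {y | ∃ i j, j < 2 ^ i ∧ y = fun n => x (2 ^ i * n + j)}

/-- An infinite word is 2-automatic iff its 2-kernel is finite. -/
def TwoAutomatic (x : ℕ → Bool) : Prop := (Kernel2 x).Finite

/-! ### auxiliary predicates -/

def Per (X : ℕ → Bool) (i n p : ℕ) : Prop := ∀ j, i ≤ j → j + p < i + n → X j = X (j + p)

def Bad (X : ℕ → Bool) : Prop := ∃ i n p, 1 ≤ p ∧ 7 * p ≤ 3 * n ∧ Per X i n p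

def PPc (c : ℕ) (X : ℕ → Bool) : Prop := ∃ p M, 1 ≤ p ∧ 7 * p + c ≤ 3 * M ∧ Per X 0 M p

/-! ### evaluation lemmas -/

lemma muI_even (w : ℕ → Bool) (k : ℕ) : muI w (2 * k) = w k := by
  unfold muI
  rw [if_pos (by omega)]
  congr 1
  omega

lemma muI_odd (w : ℕ → Bool) (k : ℕ) : muI w (2 * k + 1) = !w k := by
  unfold muI
  rw [if_neg (by omega)]
  have h : (2 * k + 1) / 2 = k := by omega
  rw [h]

lemma muI_zero (w : ℕ → Bool) : muI w 0 = w 0 := muI_even w 0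

lemma appendInf_zero (a : Bool) (u : List Bool) (X : ℕ → Bool) : appendInf (a :: u) X 0 = a := by
  simp [appendInf]

lemma appendInf_succ (a : Bool) (u : List Bool) (X : ℕ → Bool) (n : ℕ) :
    appendInf (a :: u) X (n + 1) = appendInf u X n := by
  unfold appendInf
  by_cases h : n < u.length
  · rw [dif_pos (by simp; omega), dif_pos h]
    rfl
  · rw [dif_neg (by simp; omega), dif_neg h]
    congr 1
    simp

lemma appendInf_nil (X : ℕ → Bool) : appendInf [] X = X := by
  funext n; simp [appendInf]

lemma appendInf_add (u : List Bool) (X : ℕ → Bool) (m : ℕ) :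
    appendInf u X (u.length + m) = X m := by
  induction u with
  | nil => simp [appendInf]
  | cons a u ih =>
      have h : (a :: u).length + m = (u.length + m) + 1 := by simp; omega
      rw [h, appendInf_succ, ih]

lemma appendInf_append (u v : List Bool) (X : ℕ → Bool) :
    appendInf (u ++ v) X = appendInf u (appendInf v X) := by
  induction u with
  | nil => simp [appendInf_nil]
  | cons a u ih =>
      funext n
      cases n with
      | zero => rw [List.cons_append, appendInf_zero, appendInf_zero]
      | succ n => rw [List.cons_append, appendInf_succ, appendInf_succ, ih]

lemma muI_appendInf_one (a : Bool) (Y : ℕ → Bool) :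
    muI (appendInf [a] Y) = appendInf [a, !a] (muI Y) := by
  funext n
  match n with
  | 0 =>
      rw [muI_zero, appendInf_zero, appendInf_zero]
  | 1 =>
      rw [show (1:ℕ) = 2*0+1 from rfl, muI_odd,
        show (2*0+1 : ℕ) = 0 + 1 from rfl, appendInf_succ, appendInf_zero, appendInf_zero]
  | (n+2) =>
      have h2 : appendInf [a, !a] (muI Y) (n+2) = muI Y n := by
        rw [show n+2 = (n+1)+1 from rfl, appendInf_succ, appendInf_succ, appendInf_nil]
      rw [h2]
      obtain ⟨k, hk | hk⟩ : ∃ k, n = 2*k ∨ n = 2*k+1 := ⟨n/2, by omega⟩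
      · subst hk
        rw [show 2*k+2 = 2*(k+1) from by ring, muI_even, muI_even,
          show k+1 = k+1 from rfl, appendInf_succ, appendInf_nil]
      · subst hk
        rw [show 2*k+1+2 = 2*(k+1)+1 from by ring, muI_odd, muI_odd, appendInf_succ, appendInf_nil]

lemma muI_appendInf (u : List Bool) (Y : ℕ → Bool) :
    muI (appendInf u Y) = appendInf (mu u) (muI Y) := by
  induction u with
  | nil => simp [appendInf_nil, mu]
  | cons a u ih =>
      have h1 : appendInf (a :: u) Y = appendInf [a] (appendInf u Y) := by
        rw [← appendInf_append]
        rfl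
      rw [h1, muI_appendInf_one, ih, ← appendInf_append]
      congr 1

/-! ### zone and shifting lemmas -/

lemma per_zone (u : List Bool) (Y : ℕ → Bool) {M p : ℕ}
    (H : Per (appendInf u Y) 0 M p) : Per Y 0 (M - u.length) p := by
  intro j hj0 hj
  have h1 := H (u.length + j) (by omega) (by omega)
  rwa [show u.length + j + p = u.length + (j+p) from by ring, appendInf_add, appendInf_add] at h1

lemma per_tail (a : Bool) (Z : ℕ → Bool) {i n p : ℕ} (hi : 1 ≤ i)
    (H : Per (appendInf [a] Z) i n p) : Per Z (i-1) n p := by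
  intro j hj0 hj
  have h1 := H (j+1) (by omega) (by omega)
  rwa [appendInf_succ, appendInf_nil, show j+1+p = (j+p)+1 from by ring,
    appendInf_succ, appendInf_nil] at h1

lemma bad_muI {w : ℕ → Bool} (h : Bad w) : Bad (muI w) := by
  obtain ⟨i, n, p, hp, he, H⟩ := h
  refine ⟨2*i, 2*n, 2*p, by omega, by omega, ?_⟩
  intro j hj0 hj
  obtain ⟨k, hk | hk⟩ : ∃ k, j = 2*k ∨ j = 2*k+1 := ⟨j/2, by omega⟩
  · subst hk
    rw [show 2*k+2*p = 2*(k+p) from by ring, muI_even, muI_even]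
    exact H k (by omega) (by omega)
  · subst hk
    rw [show 2*k+1+2*p = 2*(k+p)+1 from by ring, muI_odd, muI_odd,
      H k (by omega) (by omega)]

lemma bad_appendInf (u : List Bool) {Y : ℕ → Bool} (h : Bad Y) : Bad (appendInf u Y) := by
  obtain ⟨i, n, p, hp, he, H⟩ := h
  refine ⟨u.length + i, n, p, hp, he, ?_⟩
  intro j hj0 hj
  have h1 : j = u.length + (j - u.length) := by omega
  rw [h1, appendInf_add,
    show u.length + (j - u.length) + p = u.length + (j - u.length + p) from by ring, appendInf_add]
  exact H _ (by omega) (by omega)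

/-! ### odd periods are impossible in μ-images -/

lemma Zodd {w : ℕ → Bool} {s m q : ℕ}
    (H : Per (muI w) s m (2*q+1)) (hm : 2*(2*q+1) + s % 2 ≤ m) : False := by
  set p := 2*q+1 with hp
  set a := (s+1)/2 with ha
  have ha1 : s ≤ 2*a ∧ 2*a ≤ s+1 := by omega
  have R1 : ∀ k, a ≤ k → 2*k + p < s + m → w k = !w (k+q) := by
    intro k h1 h2
    have h3 := H (2*k) (by omega) (by omega)
    rwa [muI_even, show 2*k+p = 2*(k+q)+1 from by omega, muI_odd] at h3
  have R2 : ∀ k, a ≤ k → 2*k + 1 + p < s + m → (!w k) = w (k+q+1) := by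
    intro k h1 h2
    have h3 := H (2*k+1) (by omega) (by omega)
    rwa [muI_odd, show 2*k+1+p = 2*(k+q+1) from by omega, muI_even] at h3
  have C : ∀ t, t ≤ q → w (a+q+t) = w (a+q) := by
    intro t
    induction t with
    | zero => intro _; rfl
    | succ t ih =>
      intro ht
      have e2 := R2 (a+t) (by omega) (by omega)
      have e1 := R1 (a+t) (by omega) (by omega)
      have e3 : w (a+q+t+1) = w (a+t+q) := by
        rw [show a+q+t+1 = a+t+q+1 from by ring, ← e2, e1, Bool.not_not]
      rw [show a+q+(t+1) = a+q+t+1 from by ring, e3, show a+t+q = a+q+t from by ring,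
        ih (by omega)]
  have e := R1 (a+q) (by omega) (by omega)
  have c := C q (le_refl q)
  rw [show a+q+q = a+q+q from rfl] at c
  rw [c] at e
  exact absurd e (by cases hb : w (a+q) <;> simp [hb])

/-! ### even periods descend -/

lemma Zeven {w : ℕ → Bool} {s m q : ℕ} (hq : 1 ≤ q)
    (H : Per (muI w) s m (2*q)) (hm : 2*q + 1 ≤ m) :
    ∃ M, m ≤ 2*M ∧ Per w (s/2) M q := by
  refine ⟨(s+m-2*q-1)/2 + q + 1 - s/2, by omega, ?_⟩
  intro k hk0 hk
  have hk2 : 2*k ≤ s + m - 2*q - 1 := by omega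
  by_cases hcs : s ≤ 2*k
  · have h3 := H (2*k) (by omega) (by omega)
    rwa [muI_even, show 2*k + 2*q = 2*(k+q) from by ring, muI_even] at h3
  · have h3 := H (2*k+1) (by omega) (by omega)
    rw [muI_odd, show 2*k+1+2*q = 2*(k+q)+1 from by ring, muI_odd] at h3
    cases hb : w k <;> cases hb2 : w (k+q) <;> simp [hb, hb2] at h3 ⊢

lemma bad_desc {w : ℕ → Bool} (h : Bad (muI w)) : Bad w := by
  obtain ⟨i, n, p, hp, he, H⟩ := h
  obtain ⟨q, hq | hq⟩ : ∃ q, p = 2*q ∨ p = 2*q+1 := ⟨p/2, by omega⟩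
  · subst hq
    have hq1 : 1 ≤ q := by omega
    obtain ⟨M, hM, HP⟩ := Zeven hq1 H (by omega)
    exact ⟨i/2, M, q, hq1, by omega, HP⟩
  · subst hq
    exact (Zodd H (by omega)).elim

/-! ### crossing lemmas -/

lemma F1 {w : ℕ → Bool} {a : Bool} (h : Bad (appendInf [a] (muI w))) :
    Bad w ∨ PPc 2 (appendInf [!a] w) := by
  obtain ⟨i, n, p, hp, he, H⟩ := h
  by_cases hi : 1 ≤ i
  · left
    exact bad_desc ⟨i-1, n, p, hp, he, per_tail a (muI w) hi H⟩
  · have hi0 : i = 0 := by omega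
    subst hi0
    have Hz : Per (muI w) 0 (n-1) p := by
      have h1 := per_zone [a] (muI w) H
      simpa using h1
    obtain ⟨q, hq | hq⟩ : ∃ q, p = 2*q ∨ p = 2*q+1 := ⟨p/2, by omega⟩
    · subst hq
      have hq1 : 1 ≤ q := by omega
      have hL := H 0 (le_refl 0) (by omega)
      rw [appendInf_zero, show (0:ℕ)+2*q = (2*(q-1)+1)+1 from by omega, appendInf_succ,
        appendInf_nil, muI_odd] at hL
      obtain ⟨M, hM, HP⟩ := Zeven hq1 Hz (by omega)
      have HP' : Per w 0 M q := by simpa using HP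
      right
      refine ⟨q, M+1, hq1, by omega, ?_⟩
      intro j hj0 hj
      match j with
      | 0 =>
        rw [appendInf_zero, show (0:ℕ)+q = (q-1)+1 from by omega, appendInf_succ,
          appendInf_nil, hL, Bool.not_not]
      | (j+1) =>
        rw [appendInf_succ, appendInf_nil, show j+1+q = (j+q)+1 from by ring,
          appendInf_succ, appendInf_nil]
        exact HP' j (by omega) (by omega)
    · subst hq
      exact (Zodd Hz (by omega)).elim

lemma F23 {w : ℕ → Bool} {a : Bool} {c : ℕ} (hc : 2 ≤ c)
    (h : PPc c (appendInf [a] (muI w))) : PPc 3 (appendInf [!a] w) := by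
  obtain ⟨p, M, hp, he, H⟩ := h
  have Hz : Per (muI w) 0 (M-1) p := by
    have h1 := per_zone [a] (muI w) H
    simpa using h1
  obtain ⟨q, hq | hq⟩ : ∃ q, p = 2*q ∨ p = 2*q+1 := ⟨p/2, by omega⟩
  · subst hq
    have hq1 : 1 ≤ q := by omega
    have hL := H 0 (le_refl 0) (by omega)
    rw [appendInf_zero, show (0:ℕ)+2*q = (2*(q-1)+1)+1 from by omega, appendInf_succ,
      appendInf_nil, muI_odd] at hL
    obtain ⟨M', hM', HP⟩ := Zeven hq1 Hz (by omega)
    have HP' : Per w 0 M' q := by simpa using HP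
    refine ⟨q, M'+1, hq1, by omega, ?_⟩
    intro j hj0 hj
    match j with
    | 0 =>
      rw [appendInf_zero, show (0:ℕ)+q = (q-1)+1 from by omega, appendInf_succ,
        appendInf_nil, hL, Bool.not_not]
    | (j+1) =>
      rw [appendInf_succ, appendInf_nil, show j+1+q = (j+q)+1 from by ring,
        appendInf_succ, appendInf_nil]
      exact HP' j (by omega) (by omega)
  · subst hq
    exact (Zodd Hz (by omega)).elim

lemma F4 {v : ℕ → Bool} {b : Bool} (h : PPc 3 (appendInf [b] v)) : Bad v := by
  obtain ⟨p, M, hp, he, H⟩ := h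
  refine ⟨0, M-1, p, hp, by omega, ?_⟩
  have h1 := per_zone [b] v H
  simpa using h1

lemma F5 {u : ℕ → Bool} (h : PPc 3 (muI u)) : PPc 2 u := by
  obtain ⟨p, M, hp, he, H⟩ := h
  obtain ⟨q, hq | hq⟩ : ∃ q, p = 2*q ∨ p = 2*q+1 := ⟨p/2, by omega⟩
  · subst hq
    have hq1 : 1 ≤ q := by omega
    obtain ⟨M', hM', HP⟩ := Zeven hq1 H (by omega)
    have HP' : Per u 0 M' q := by simpa using HP
    exact ⟨q, M', hq1, by omega, HP'⟩
  · subst hq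
    exact (Zodd H (by omega)).elim

lemma F6 {v : ℕ → Bool} (h : PPc 2 (appendInf [false, false] (muI v))) : v 0 = false := by
  obtain ⟨p, M, hp, he, H⟩ := h
  have e2 : ∀ m, appendInf [false, false] (muI v) (m+2) = muI v m := by
    intro m
    rw [show m+2 = (m+1)+1 from rfl, appendInf_succ, appendInf_succ, appendInf_nil]
  have eX0 : appendInf [false, false] (muI v) 0 = false := appendInf_zero _ _ _
  have eX1 : appendInf [false, false] (muI v) 1 = false := by
    rw [show (1:ℕ) = 0+1 from rfl, appendInf_succ, appendInf_zero]
  obtain ⟨q, hq | hq⟩ : ∃ q, p = 2*q ∨ p = 2*q+1 := ⟨p/2, by omega⟩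
  · subst hq
    exfalso
    have hq1 : 1 ≤ q := by omega
    have h0 := H 0 (le_refl 0) (by omega)
    have h1 := H 1 (by omega) (by omega)
    rw [eX0, show (0:ℕ)+2*q = (2*(q-1))+2 from by omega, e2, muI_even] at h0
    rw [eX1, show (1:ℕ)+2*q = (2*(q-1)+1)+2 from by omega, e2, muI_odd] at h1
    rw [← h0] at h1
    simp at h1
  · subst hq
    rcases Nat.eq_zero_or_pos q with hq0 | hq1
    · subst hq0
      by_cases hM : 4 ≤ M
      · exfalso
        have Hz : Per (muI v) 0 (M-2) (2*0+1) := by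
          have h1 := per_zone [false, false] (muI v) H
          simpa using h1
        exact Zodd Hz (by omega)
      · have hM3 : M = 3 := by omega
        have h1 := H 1 (by omega) (by omega)
        rw [eX1, show (1:ℕ)+(2*0+1) = 0+2 from rfl, e2, muI_zero] at h1
        exact h1.symm
    · exfalso
      have Hz : Per (muI v) 0 (M-2) (2*q+1) := by
        have h1 := per_zone [false, false] (muI v) H
        simpa using h1
      exact Zodd Hz (by omega)

lemma F7 {w2 : ℕ → Bool} (h0 : w2 0 = true) (h1 : w2 1 = false)
    (h : Bad (appendInf [false, false] (muI w2))) :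
    Bad (appendInf [false] (muI w2)) ∨ w2 2 = false := by
  obtain ⟨i, n, p, hp, he, H⟩ := h
  have hsplit : appendInf [false, false] (muI w2)
      = appendInf [false] (appendInf [false] (muI w2)) := by
    rw [← appendInf_append]
    rfl
  have e2 : ∀ m, appendInf [false, false] (muI w2) (m+2) = muI w2 m := by
    intro m
    rw [show m+2 = (m+1)+1 from rfl, appendInf_succ, appendInf_succ, appendInf_nil]
  have eX0 : appendInf [false, false] (muI w2) 0 = false := appendInf_zero _ _ _
  have eX1 : appendInf [false, false] (muI w2) 1 = false := by
    rw [show (1:ℕ) = 0+1 from rfl, appendInf_succ, appendInf_zero]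
  by_cases hi : 1 ≤ i
  · left
    rw [hsplit] at H
    exact ⟨i-1, n, p, hp, he, per_tail _ _ hi H⟩
  · have hi0 : i = 0 := by omega
    subst hi0
    obtain ⟨q, hq | hq⟩ : ∃ q, p = 2*q ∨ p = 2*q+1 := ⟨p/2, by omega⟩
    · subst hq
      exfalso
      have hq1 : 1 ≤ q := by omega
      have ha := H 0 (le_refl 0) (by omega)
      have hb := H 1 (by omega) (by omega)
      rw [eX0, show (0:ℕ)+2*q = (2*(q-1))+2 from by omega, e2, muI_even] at ha
      rw [eX1, show (1:ℕ)+2*q = (2*(q-1)+1)+2 from by omega, e2, muI_odd] at hb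
      rw [← ha] at hb
      simp at hb
    · subst hq
      rcases Nat.eq_zero_or_pos q with hq0 | hq1
      · subst hq0
        exfalso
        have hb := H 1 (by omega) (by omega)
        rw [eX1, show (1:ℕ)+(2*0+1) = 0+2 from rfl, e2, muI_zero, h0] at hb
        exact absurd hb (by simp)
      · by_cases hn : 4*q + 4 ≤ n
        · exfalso
          have Hz : Per (muI w2) 0 (n-2) (2*q+1) := by
            have hz1 := per_zone [false, false] (muI w2) H
            simpa using hz1
          exact Zodd Hz (by omega)
        · have hqq : q = 1 := by omega
          subst hqq
          have hn7 : n = 7 := by omega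
          right
          have hc := H 3 (by omega) (by omega)
          rw [show (3:ℕ) = 1+2 from rfl, e2, show (1:ℕ) = 2*0+1 from rfl, muI_odd, h0,
            show (2*0+1)+2+(2*1+1) = 4+2 from rfl, e2, show (4:ℕ) = 2*2 from rfl,
            muI_even] at hc
          simpa using hc.symm

/-! ### top-level characterizations -/

lemma hmu_t (Y : ℕ → Bool) : appendInf [true, false] (muI Y) = muI (appendInf [true] Y) := by
  rw [muI_appendInf]
  congr 1

lemma hmu_f (Y : ℕ → Bool) : appendInf [false, true] (muI Y) = muI (appendInf [false] Y) := by
  rw [muI_appendInf]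
  congr 1

lemma badA_iff (x : ℕ → Bool) :
    Bad (appendInf [false, false, true, false, false, true] (muI (muI (muI (muI x)))))
      ↔ (Bad x ∨ x 0 = false) := by
  constructor
  · intro h
    have hA : appendInf [false, false, true, false, false, true] (muI (muI (muI (muI x))))
        = appendInf [false, false] (muI (appendInf [true, false] (muI (muI (muI x))))) := by
      rw [muI_appendInf, ← appendInf_append]
      congr 1
    rw [hA] at h
    have h0 : appendInf [true, false] (muI (muI (muI x))) 0 = true := appendInf_zero _ _ _
    have h1 : appendInf [true, false] (muI (muI (muI x))) 1 = false := by
      rw [show (1:ℕ) = 0+1 from rfl, appendInf_succ, appendInf_zero]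
    rcases F7 h0 h1 h with hZ | hw22
    · rcases F1 hZ with hw2b | hPP
      · -- Bad w2
        rw [hmu_t] at hw2b
        rcases F1 (bad_desc hw2b) with hX1 | hPP1
        · exact Or.inl (bad_desc hX1)
        · simp only [Bool.not_true] at hPP1
          have h3 : PPc 3 (appendInf [!false] x) := F23 (by norm_num) hPP1
          exact Or.inl (F4 h3)
      · -- PPc 2 (appendInf [true] w2)
        simp only [Bool.not_false] at hPP
        rw [hmu_t] at hPP
        have h3 : PPc 3 (appendInf [!true] (appendInf [true] (muI (muI x)))) :=
          F23 (by norm_num) hPP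
        simp only [Bool.not_true] at h3
        have hkey : appendInf [false] (appendInf [true] (muI (muI x)))
            = muI (appendInf [false] (muI x)) := by
          rw [← appendInf_append, ← hmu_f]
          rfl
        rw [hkey] at h3
        have h4 : PPc 2 (appendInf [false] (muI x)) := F5 h3
        have h5 : PPc 3 (appendInf [!false] x) := F23 (by norm_num) h4
        exact Or.inl (F4 h5)
    · right
      rw [show (2:ℕ) = (0+1)+1 from rfl, appendInf_succ, appendInf_succ, appendInf_nil,
        muI_zero, muI_zero, muI_zero] at hw22
      exact hw22
  · intro h
    rcases h with hb | h0
    · exact bad_appendInf _ (bad_muI (bad_muI (bad_muI (bad_muI hb))))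
    · refine ⟨0, 7, 3, by norm_num, by norm_num, ?_⟩
      have e6 : appendInf [false, false, true, false, false, true] (muI (muI (muI (muI x)))) 6
          = false := by
        have h6 := appendInf_add [false, false, true, false, false, true]
          (muI (muI (muI (muI x)))) 0
        simp only [List.length_cons, List.length_nil] at h6
        rw [show (6:ℕ) = 0+1+1+1+1+1+1 from rfl, h6, muI_zero, muI_zero, muI_zero, muI_zero, h0]
      intro j hj0 hj
      have hj' : j ≤ 3 := by omega
      interval_cases j
      · rfl
      · rfl
      · rfl
      · show appendInf _ _ 3 = appendInf _ _ (3+3)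
        rw [show (3:ℕ)+3 = 6 from rfl, e6]
        rfl

lemma badB_iff (x : ℕ → Bool) :
    Bad (appendInf [true, false, true] (muI (muI (muI x))))
      ↔ (Bad x ∨ x 0 = false) := by
  constructor
  · intro h
    have hB : appendInf [true, false, true] (muI (muI (muI x)))
        = appendInf [true] (muI (appendInf [false] (muI (muI x)))) := by
      rw [← hmu_f, ← appendInf_append]
      rfl
    rw [hB] at h
    rcases F1 h with hwB | hPP
    · -- Bad (appendInf [false] (muI (muI x)))
      rcases F1 hwB with hX1 | hPP1
      · exact Or.inl (bad_desc hX1)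
      · simp only [Bool.not_false] at hPP1
        have h3 : PPc 3 (appendInf [!true] x) := F23 (by norm_num) hPP1
        simp only [Bool.not_true] at h3
        exact Or.inl (F4 h3)
    · -- PPc 2 (appendInf [false] (appendInf [false] (muI (muI x))))
      simp only [Bool.not_true] at hPP
      have hkey : appendInf [false] (appendInf [false] (muI (muI x)))
          = appendInf [false, false] (muI (muI x)) := by
        rw [← appendInf_append]
        rfl
      rw [hkey] at hPP
      have h4 := F6 hPP
      rw [muI_zero] at h4
      exact Or.inr h4
  · intro h
    rcases h with hb | h0
    · exact bad_appendInf _ (bad_muI (bad_muI (bad_muI hb)))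
    · refine ⟨0, 5, 2, by norm_num, by norm_num, ?_⟩
      have e3 : appendInf [true, false, true] (muI (muI (muI x))) 3 = false := by
        have h3 := appendInf_add [true, false, true] (muI (muI (muI x))) 0
        simp only [List.length_cons, List.length_nil] at h3
        rw [show (3:ℕ) = 0+1+1+1 from rfl, h3, muI_zero, muI_zero, muI_zero, h0]
      have e4 : appendInf [true, false, true] (muI (muI (muI x))) 4 = true := by
        have h4 := appendInf_add [true, false, true] (muI (muI (muI x))) 1
        simp only [List.length_cons, List.length_nil] at h4
        rw [show (4:ℕ) = 0+1+1+1+1 from rfl]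
        rw [show (0:ℕ)+1+1+1+1 = 3+1 from rfl, h4,
          show (1:ℕ) = 2*0+1 from rfl, muI_odd, muI_zero, muI_zero, h0]
        rfl
      intro j hj0 hj
      have hj' : j ≤ 2 := by omega
      interval_cases j
      · rfl
      · show appendInf _ _ 1 = appendInf _ _ (1+2)
        rw [show (1:ℕ)+2 = 3 from rfl, e3]
        rfl
      · show appendInf _ _ 2 = appendInf _ _ (2+2)
        rw [show (2:ℕ)+2 = 4 from rfl, e4]
        rfl

/-! ### bridge to Free73 -/

lemma free_iff_not_bad (X : ℕ → Bool) : Free73 X ↔ ¬ Bad X := by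
  unfold Free73 FreeI
  constructor
  · intro hf hb
    obtain ⟨i, n, p, hp, he, H⟩ := hb
    refine hf ((List.range n).map fun k => X (i+k)) ⟨i, ?_⟩ ⟨p, hp, ?_, ?_⟩
    · intro k hk
      simp only [List.length_map, List.length_range] at hk
      simp [List.get_eq_getElem]
    · intro jj hjj
      simp only [List.length_map, List.length_range] at hjj
      rw [List.getD_eq_getElem _ _ (by simp; omega), List.getD_eq_getElem _ _ (by simp; omega)]
      simp only [List.getElem_map, List.getElem_range]
      have := H (i+jj) (by omega) (by omega)
      rwa [show i + jj + p = i + (jj + p) from by ring] at this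
    · simp only [List.length_map, List.length_range]
      have h3 : (7:ℚ) * p ≤ 3 * n := by exact_mod_cast he
      linarith
  · intro hnb w hfac hexp
    obtain ⟨i, hi⟩ := hfac
    obtain ⟨p, hp, hper, hlen⟩ := hexp
    apply hnb
    refine ⟨i, w.length, p, hp, ?_, ?_⟩
    · have h3 : (7:ℚ) * p ≤ 3 * w.length := by linarith
      exact_mod_cast h3
    · intro j hj0 hj
      have hk1 : j - i < w.length := by omega
      have hk2 : j - i + p < w.length := by omega
      have e1 := hi (j-i) hk1
      have e2 := hi (j-i+p) hk2
      have e3 := hper (j-i) (by omega)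
      rw [List.getD_eq_getElem _ _ hk1, List.getD_eq_getElem _ _ hk2] at e3
      rw [List.get_eq_getElem] at e1 e2
      rw [show i + (j-i) = j from by omega] at e1
      rw [show i + (j-i+p) = j+p from by omega] at e2
      rw [← e1, ← e2, e3]

theorem stmt15 (x : ℕ → Bool) :
    Free73 (appendInf [false, false, true, false, false, true] (muI (muI (muI (muI x))))) ↔
    Free73 (appendInf [true, false, true] (muI (muI (muI x)))) := by
  rw [free_iff_not_bad, free_iff_not_bad, badA_iff, badB_iff]
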